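/- arXiv:1608.08854 — 4 statements merged into one kernel-verified Lean document; each statement's English description precedes it below -/
import Mathlib

section
/- For every natural number n ≥ 1, the integer 6n - 1 divides 2 * (6n)! / ((3n)! * (2n)!). -/
theorem sixn_sub_one_dvd_two_mul (n : ℕ) (hn : 1 ≤ n) :
    (6 * n - 1) ∣ 2 * (Nat.factorial (6 * n) / (Nat.factorial (3 * n) * Nat.factorial (2 * n))) := by
  set D := Nat.factorial (3 * n) * Nat.factorial (2 * n) with hDdef
  have h1 : D ∣ Nat.factorial (5 * n) := by
    have := Nat.factorial_mul_factorial_dvd_factorial_add (3 * n) (2 * n)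
    rwa [show 3 * n + 2 * n = 5 * n by omega] at this
  have hDdvd : D ∣ Nat.factorial (6 * n) :=
    h1.trans (Nat.factorial_dvd_factorial (by omega))
  have hDpos : 0 < D := Nat.mul_pos (Nat.factorial_pos _) (Nat.factorial_pos _)
  have key : ∃ t, 2 * Nat.factorial (6 * n) = D * ((6 * n - 1) * t) := by
    rcases Nat.lt_or_ge n 2 with h | h
    · interval_cases n
      exact ⟨24, by rw [hDdef]; decide⟩
    · have h2 : D ∣ Nat.factorial (6 * n - 2) :=
        h1.trans (Nat.factorial_dvd_factorial (by omega))
      obtain ⟨c, hc⟩ := h2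
      have hfact : Nat.factorial (6 * n) =
          (6 * n) * ((6 * n - 1) * Nat.factorial (6 * n - 2)) := by
        have he : 6 * n = (6 * n - 2) + 1 + 1 := by omega
        rw [he, Nat.factorial_succ, Nat.factorial_succ]
        have h2' : 6 * n - 2 + 1 + 1 = 6 * n := by omega
        have h1' : 6 * n - 2 + 1 = 6 * n - 1 := by omega
        rw [h2', h1']
      exact ⟨12 * n * c, by rw [hfact, hc]; ring⟩
  obtain ⟨t, ht⟩ := key
  refine ⟨t, ?_⟩
  rw [← Nat.mul_div_assoc 2 hDdvd, ht, Nat.mul_div_cancel_left _ hDpos]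
end

section
/- In the ring of formal power series ℚ[[T]], the series A(T) = Σ_{n≥0} (6n)!/((3n)!(2n)!) T^n and B(T) = Σ_{n≥0} ((6n+1)/(6n-1)) * (6n)!/((3n)!(2n)!) * T^n satisfy the identity A(T)·B(-T) + A(-T)·B(T) = -2. -/
/-- `a n = (6n)! / ((3n)! (2n)!)`, as a rational number. -/
noncomputable def pixtonA (n : ℕ) : ℚ :=
  (Nat.factorial (6 * n) : ℚ) / ((Nat.factorial (3 * n) : ℚ) * (Nat.factorial (2 * n) : ℚ))

/-- `b n = ((6n+1)/(6n-1)) * a n`. -/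
noncomputable def pixtonB (n : ℕ) : ℚ :=
  ((6 * (n : ℚ) + 1) / (6 * (n : ℚ) - 1)) * pixtonA n

/-- The power series `A(T)`. -/
noncomputable def seriesA : PowerSeries ℚ := PowerSeries.mk pixtonA

/-- The power series `B(T)`. -/
noncomputable def seriesB : PowerSeries ℚ := PowerSeries.mk pixtonB

/-- The power series `A(-T)`. -/
noncomputable def seriesAneg : PowerSeries ℚ := PowerSeries.mk fun n => (-1) ^ n * pixtonA n

/-- The power series `B(-T)`. -/
noncomputable def seriesBneg : PowerSeries ℚ := PowerSeries.mk fun n => (-1) ^ n * pixtonB n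

/-!
`B` solves `432 T² B'' = (1 - 864 T) B' + 84 B` (this is the recurrence
`(n+1) b_{n+1} = 12 (6n+7)(6n-1) b_n`), so `B(-T)` solves the same equation with `1 - 864 T`
replaced by `-1 - 864 T`. For such a pair, `B(T) B(-T) - 432 T² (B'(T) B(-T) - B(T) (B(-T))')` has zero
derivative, hence equals its constant term `b₀² = 1`. Since `A = 864 T² B' - B - 144 T B`,
the left-hand side of the identity is `-2` times this invariant.
-/

namespace PowerSeries

variable {R : Type*} [CommRing R]

lemma coeff_X_mul_derivative (f : R⟦X⟧) (n : ℕ) :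
    coeff n (X * d⁄dX R f) = n * coeff n f := by
  cases n with
  | zero => simp
  | succ n => rw [coeff_succ_X_mul, coeff_derivative, mul_comm, Nat.cast_succ]

lemma coeff_X_sq_mul_derivative_derivative (f : R⟦X⟧) (n : ℕ) :
    coeff n (X ^ 2 * d⁄dX R (d⁄dX R f)) = n * (n - 1) * coeff n f := by
  have : X ^ 2 * d⁄dX R (d⁄dX R f) = X * d⁄dX R (X * d⁄dX R f) - X * d⁄dX R f := by
    simp only [Derivation.leibniz, derivative_X, smul_eq_mul]
    ring
  rw [this, map_sub, coeff_X_mul_derivative, coeff_X_mul_derivative]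
  ring

lemma evalNegHom_derivative (f : R⟦X⟧) :
    evalNegHom (d⁄dX R f) = -d⁄dX R (evalNegHom f) := by
  ext n
  simp only [evalNegHom, coeff_derivative, coeff_rescale, map_neg, pow_succ]
  ring

lemma evalNegHom_C (a : R) : evalNegHom (C a) = C a := by
  ext n
  cases n <;> simp [evalNegHom, coeff_C]

lemma constantCoeff_evalNegHom (f : R⟦X⟧) : constantCoeff (evalNegHom f) = constantCoeff f := by
  rw [← coeff_zero_eq_constantCoeff_apply, ← coeff_zero_eq_constantCoeff_apply, evalNegHom,
    coeff_rescale, pow_zero, one_mul]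

variable {c u k : R}

lemma evalNegHom_ode {f : R⟦X⟧}
    (hf : C c * X ^ 2 * d⁄dX R (d⁄dX R f) = (C u - 2 * C c * X) * d⁄dX R f + C k * f) :
    C c * X ^ 2 * d⁄dX R (d⁄dX R (evalNegHom f)) =
      (-C u - 2 * C c * X) * d⁄dX R (evalNegHom f) + C k * evalNegHom f := by
  have := congrArg evalNegHom hf
  simp only [map_add, map_sub, map_mul, map_pow, map_neg, map_ofNat, evalNegHom_C, evalNegHom_X,
    evalNegHom_derivative] at this
  linear_combination this

lemma derivative_wronskian_eq_zero {f g : R⟦X⟧}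
    (hf : C c * X ^ 2 * d⁄dX R (d⁄dX R f) = (C u - 2 * C c * X) * d⁄dX R f + C k * f)
    (hg : C c * X ^ 2 * d⁄dX R (d⁄dX R g) = (-C u - 2 * C c * X) * d⁄dX R g + C k * g) :
    d⁄dX R (C u * f * g - C c * X ^ 2 * (d⁄dX R f * g - f * d⁄dX R g)) = 0 := by
  simp only [map_sub, Derivation.leibniz, derivative_C, derivative_X, derivative_pow,
    smul_eq_mul]
  linear_combination f * hg - g * hf

lemma wronskian_evalNegHom [IsAddTorsionFree R] {f : R⟦X⟧}
    (hf : C c * X ^ 2 * d⁄dX R (d⁄dX R f) = (C u - 2 * C c * X) * d⁄dX R f + C k * f) :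
    C u * f * evalNegHom f
      - C c * X ^ 2 * (d⁄dX R f * evalNegHom f - f * d⁄dX R (evalNegHom f))
      = C (u * constantCoeff f ^ 2) := by
  apply derivative.ext
  · rw [derivative_wronskian_eq_zero hf (evalNegHom_ode hf), derivative_C]
  · simp [constantCoeff_evalNegHom, sq, mul_assoc]

end PowerSeries

open PowerSeries

lemma pixtonA_zero : pixtonA 0 = 1 := by simp [pixtonA]

lemma pixtonB_zero : pixtonB 0 = -1 := by simp [pixtonB, pixtonA_zero]

lemma succ_mul_pixtonA_succ (n : ℕ) :
    (n + 1) * pixtonA (n + 1) = 12 * (6 * n + 1) * (6 * n + 5) * pixtonA n := by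
  unfold pixtonA
  rw [show 6 * (n + 1) = 6 * n + 5 + 1 by ring, show 3 * (n + 1) = 3 * n + 2 + 1 by ring,
    show 2 * (n + 1) = 2 * n + 1 + 1 by ring]
  simp only [Nat.factorial_succ]
  push_cast
  field_simp
  ring

lemma six_mul_sub_one_ne_zero (n : ℕ) : 6 * (n : ℚ) - 1 ≠ 0 := by
  have : (6 * n : ℚ) ≠ 1 := by exact_mod_cast (by omega : 6 * n ≠ 1)
  exact sub_ne_zero.mpr this

lemma mul_pixtonB (n : ℕ) : (6 * n - 1) * pixtonB n = (6 * n + 1) * pixtonA n := by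
  unfold pixtonB
  field_simp [six_mul_sub_one_ne_zero n]

lemma succ_mul_pixtonB_succ (n : ℕ) :
    (n + 1) * pixtonB (n + 1) = 12 * (6 * n + 7) * (6 * n - 1) * pixtonB n := by
  have h5 : (6 * n + 5 : ℚ) ≠ 0 := by positivity
  apply mul_left_cancel₀ h5
  have := mul_pixtonB (n + 1)
  push_cast at this
  linear_combination (n + 1 : ℚ) * this + (6 * n + 7) * succ_mul_pixtonA_succ n
    - 12 * (6 * n + 7) * (6 * n + 5) * mul_pixtonB n

lemma pixtonA_succ_add_pixtonB_succ (n : ℕ) :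
    pixtonA (n + 1) + pixtonB (n + 1) = 144 * (6 * n - 1) * pixtonB n := by
  have h7 : (6 * n + 7 : ℚ) ≠ 0 := by positivity
  apply mul_left_cancel₀ h7
  have := mul_pixtonB (n + 1)
  push_cast at this
  linear_combination -this + 12 * succ_mul_pixtonB_succ n

lemma seriesBneg_eq_evalNegHom : seriesBneg = evalNegHom seriesB := by
  rw [seriesB, evalNegHom, rescale_mk, seriesBneg]

lemma seriesAneg_eq_evalNegHom : seriesAneg = evalNegHom seriesA := by
  rw [seriesA, evalNegHom, rescale_mk, seriesAneg]

lemma constantCoeff_seriesB : constantCoeff seriesB = -1 := by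
  rw [← coeff_zero_eq_constantCoeff_apply, seriesB, coeff_mk, pixtonB_zero]

lemma seriesA_add_seriesB :
    seriesA + seriesB = X * (C 864 * (X * d⁄dX ℚ seriesB) - C 144 * seriesB) := by
  ext n
  cases n with
  | zero => simp [seriesA, seriesB, pixtonA_zero, pixtonB_zero]
  | succ n =>
    simp only [map_add, map_sub, coeff_succ_X_mul, coeff_C_mul, coeff_X_mul_derivative,
      seriesA, seriesB, coeff_mk]
    linear_combination pixtonA_succ_add_pixtonB_succ n

lemma seriesB_ode : C 432 * X ^ 2 * d⁄dX ℚ (d⁄dX ℚ seriesB) =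
    (C 1 - 2 * C 432 * X) * d⁄dX ℚ seriesB + C 84 * seriesB := by
  have h864 : (2 : ℚ⟦X⟧) * C 432 = C 864 := by rw [← map_ofNat C 2, ← map_mul]; norm_num
  suffices C 432 * (X ^ 2 * d⁄dX ℚ (d⁄dX ℚ seriesB)) =
      C 1 * d⁄dX ℚ seriesB - C 864 * (X * d⁄dX ℚ seriesB) + C 84 * seriesB by
    rw [← h864] at this
    linear_combination this
  ext n
  simp only [map_add, map_sub, coeff_C_mul, coeff_X_sq_mul_derivative_derivative,
    coeff_X_mul_derivative, coeff_derivative, seriesB, coeff_mk]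
  linear_combination -succ_mul_pixtonB_succ n

theorem pixton_series_identity :
    seriesA * seriesBneg + seriesAneg * seriesB = -2 := by
  have hW := wronskian_evalNegHom seriesB_ode
  rw [← seriesBneg_eq_evalNegHom, constantCoeff_seriesB] at hW
  have hA := seriesA_add_seriesB
  have hAneg := congrArg evalNegHom hA
  simp only [map_add, map_sub, map_mul, evalNegHom_C, evalNegHom_X, evalNegHom_derivative,
    ← seriesBneg_eq_evalNegHom, ← seriesAneg_eq_evalNegHom] at hAneg
  simp only [map_ofNat, map_one, map_mul, map_pow, map_neg] at hW hA hAneg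
  linear_combination seriesBneg * hA + seriesB * hAneg - 2 * hW
end

section
/- Let a(n) = (6n)!/((3n)!(2n)!) and b(n) = ((6n+1)/(6n-1)) * (6n)!/((3n)!(2n)!) as rational numbers. Then for every even natural number n ≥ 2, Σ_{i+j=n} (-1)^i * a(i) * b(j) = 0. -/
/-!
Write `c n = ∑_{i+j=n} (-1)^i a(i) b(j)`. Creative telescoping (Zeilberger's algorithm) gives the
recurrence `(n + 1) c(n + 2) = 20736 n (3n + 2)(3n + 4) c(n)`. Because of the factor `n`, it forces
`c 2 = 0`, and then `c (2k + 2) = 0` for every `k`.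
-/

lemma six_mul_cast_sub_one_ne_zero (j : ℕ) : 6 * (j : ℚ) - 1 ≠ 0 := by
  intro h
  have : (6 * j : ℚ) = (1 : ℕ) := by push_cast; linarith
  norm_cast at this
  omega

lemma pixtonA_succ (i : ℕ) :
    pixtonA (i + 1) = 12 * (6 * i + 5) * (6 * i + 1) / (i + 1) * pixtonA i := by
  have h6 : 6 * (i + 1) = 6 * i + 5 + 1 := by ring
  have h3 : 3 * (i + 1) = 3 * i + 2 + 1 := by ring
  have h2 : 2 * (i + 1) = 2 * i + 1 + 1 := by ring
  simp only [pixtonA, h6, h3, h2, Nat.factorial_succ]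
  push_cast
  field_simp
  ring

lemma pixtonB_succ (j : ℕ) :
    pixtonB (j + 1) = 12 * (6 * j + 7) * (6 * j - 1) / (j + 1) * pixtonB j := by
  have h1 := six_mul_cast_sub_one_ne_zero j
  have h5 : 6 * ((j : ℚ) + 1) - 1 ≠ 0 := by ring_nf; positivity
  rw [pixtonB, pixtonB, pixtonA_succ]
  push_cast
  field_simp
  ring

noncomputable def pixtonTerm (i j : ℕ) : ℚ :=
  (-1) ^ i * pixtonA i * pixtonB j

noncomputable def pixtonConv (n : ℕ) : ℚ :=
  ∑ i ∈ Finset.range (n + 1), pixtonTerm i (n - i)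

/-- Zeilberger's certificate for `pixtonTerm`, found by computer algebra. -/
noncomputable def pixtonCert (i j : ℕ) : ℚ :=
  pixtonTerm i j * i *
      (36 * (i + j - 1) * i ^ 2 - 12 * (3 * (i + j) - 2) ^ 2 * i
        + 72 * (i + j) ^ 3 - 108 * (i + j) ^ 2 + 55 * (i + j) - 7) /
    ((i + j) * (6 * j + 1) * (6 * j - 7))

lemma pixtonCert_zero_left (j : ℕ) : pixtonCert 0 j = 0 := by
  simp [pixtonCert]

lemma pixtonTerm_telescope (i j : ℕ) :
    (i + j + 1) * pixtonTerm i (j + 2)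
        - 20736 * (i + j) * (3 * (i + j) + 2) * (3 * (i + j) + 4) * pixtonTerm i j
      = pixtonCert (i + 1) (j + 1) - pixtonCert i (j + 2) := by
  have h1 := six_mul_cast_sub_one_ne_zero j
  have h7 : 6 * ((j : ℚ) + 1) - 7 ≠ 0 := by contrapose! h1; linarith
  have h5 : 6 * ((j : ℚ) + 2) - 7 ≠ 0 := by ring_nf; positivity
  simp only [pixtonCert, pixtonTerm, pixtonA_succ, pixtonB_succ]
  push_cast
  field_simp
  ring

lemma pixtonTerm_boundary (n : ℕ) :
    (n + 1) * (pixtonTerm (n + 1) 1 + pixtonTerm (n + 2) 0) = -pixtonCert (n + 1) 1 := by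
  simp only [pixtonCert, pixtonTerm, pixtonA_succ, pixtonB_succ]
  push_cast
  field_simp
  ring

lemma pixtonConv_add_two (n : ℕ) :
    pixtonConv (n + 2)
      = 20736 * n * (3 * n + 2) * (3 * n + 4) / (n + 1) * pixtonConv n := by
  have hsplit : pixtonConv (n + 2) = ∑ i ∈ Finset.range (n + 1), pixtonTerm i (n + 2 - i)
      + (pixtonTerm (n + 1) 1 + pixtonTerm (n + 2) 0) := by
    rw [pixtonConv, Finset.sum_range_succ, Finset.sum_range_succ, add_assoc,
      show n + 2 - (n + 1) = 1 by omega, Nat.sub_self]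
  have htelescope : ∑ i ∈ Finset.range (n + 1), ((n + 1) * pixtonTerm i (n + 2 - i)
      - 20736 * n * (3 * n + 2) * (3 * n + 4) * pixtonTerm i (n - i)) = pixtonCert (n + 1) 1 := by
    rw [Finset.sum_congr rfl (g := fun i ↦ pixtonCert (i + 1) (n + 2 - (i + 1))
      - pixtonCert i (n + 2 - i)), Finset.sum_range_sub (fun i ↦ pixtonCert i (n + 2 - i))]
    · simp [pixtonCert_zero_left, show n + 2 - (n + 1) = 1 by omega]
    intro i hi
    obtain ⟨j, rfl⟩ : ∃ j, n = i + j := ⟨n - i, by simp at hi; omega⟩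
    rw [show i + j + 2 - i = j + 2 by omega, show i + j + 2 - (i + 1) = j + 1 by omega,
      Nat.add_sub_cancel_left, ← pixtonTerm_telescope]
    push_cast
    ring
  rw [Finset.sum_sub_distrib, ← Finset.mul_sum, ← Finset.mul_sum] at htelescope
  rw [hsplit, pixtonConv]
  field_simp
  linear_combination htelescope + pixtonTerm_boundary n

theorem pixton_convolution_vanishes (n : ℕ) (hn : 2 ≤ n) (heven : Even n) :
    ∑ i ∈ Finset.range (n + 1), (-1 : ℚ) ^ i * pixtonA i * pixtonB (n - i) = 0 := by
  obtain ⟨k, rfl⟩ : ∃ k, n = 2 * k + 2 := by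
    obtain ⟨r, rfl⟩ := heven
    exact ⟨r - 1, by omega⟩
  clear hn heven
  show pixtonConv (2 * k + 2) = 0
  induction k with
  | zero => simp [pixtonConv_add_two 0]
  | succ k ih => rw [show 2 * (k + 1) + 2 = 2 * k + 2 + 2 by omega, pixtonConv_add_two, ih, mul_zero]
end

section
/- For every pair of natural numbers (g, n) with 2g - 2 + n > 0, there are only finitely many isomorphism classes of connected stable graphs of genus g with n legs. -/
/-- A connected stable graph of genus `g` with `n` legs.  Vertices are `Fin V`,
edges are `Fin E` with an (arbitrarily oriented) pair of endpoints, legs are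
attached to vertices via `leg`, and each vertex carries a genus. -/
structure StableGraph (g n : ℕ) where
  /-- number of vertices -/
  V : ℕ
  /-- number of edges -/
  E : ℕ
  hV : 0 < V
  /-- endpoints of each edge (an orientation is chosen arbitrarily) -/
  ends : Fin E → Fin V × Fin V
  /-- vertex to which each leg is attached -/
  leg : Fin n → Fin V
  /-- genus of each vertex -/
  genus : Fin V → ℕ
  /-- the graph is connected -/
  connected : ∀ v w : Fin V, Relation.ReflTransGen
    (fun a b => ∃ e, ends e = (a, b) ∨ ends e = (b, a)) v w
  /-- `g = Σ_v g(v) + |E| - |V| + 1` -/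
  genus_eq : (g : ℤ) = ∑ v, (genus v : ℤ) + E - V + 1
  /-- stability: `2 g(v) - 2 + n(v) > 0` at every vertex -/
  stable : ∀ v : Fin V,
    0 < 2 * (genus v : ℤ) - 2 +
      (((Finset.univ.filter fun e => (ends e).1 = v).card : ℤ) +
       ((Finset.univ.filter fun e => (ends e).2 = v).card : ℤ) +
       ((Finset.univ.filter fun i => leg i = v).card : ℤ))

/-- The valence `n(v)`: the number of half-edges at `v` plus the number of legs at `v`. -/
def StableGraph.val {g n : ℕ} (Γ : StableGraph g n) (v : Fin Γ.V) : ℕ :=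
  (Finset.univ.filter fun e => (Γ.ends e).1 = v).card +
  (Finset.univ.filter fun e => (Γ.ends e).2 = v).card +
  (Finset.univ.filter fun i => Γ.leg i = v).card

/-- Isomorphism of stable graphs: bijections of vertices and edges compatible with
the endpoint maps (up to reversing an edge's orientation), the legs, and the genus
function. -/
def StableGraph.Iso {g n : ℕ} (Γ₁ Γ₂ : StableGraph g n) : Prop :=
  ∃ (σ : Fin Γ₁.V ≃ Fin Γ₂.V) (τ : Fin Γ₁.E ≃ Fin Γ₂.E),
    (∀ e, Γ₂.ends (τ e) = (σ (Γ₁.ends e).1, σ (Γ₁.ends e).2) ∨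
          Γ₂.ends (τ e) = (σ (Γ₁.ends e).2, σ (Γ₁.ends e).1)) ∧
    (∀ i, Γ₂.leg i = σ (Γ₁.leg i)) ∧
    (∀ v, Γ₂.genus (σ v) = Γ₁.genus v)


section AuxFiniteness

variable {g n : ℕ}

private lemma StableGraph.sum_fst (Γ : StableGraph g n) :
    ∑ v : Fin Γ.V, (((Finset.univ.filter fun e => (Γ.ends e).1 = v).card : ℤ)) = Γ.E := by
  rw [← Nat.cast_sum]; norm_cast; conv_rhs => rw [← Finset.card_fin Γ.E]
  exact (Finset.card_eq_sum_card_fiberwise (f := fun e => (Γ.ends e).1)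
    (fun x _ => Finset.mem_univ _)).symm

private lemma StableGraph.sum_snd (Γ : StableGraph g n) :
    ∑ v : Fin Γ.V, (((Finset.univ.filter fun e => (Γ.ends e).2 = v).card : ℤ)) = Γ.E := by
  rw [← Nat.cast_sum]; norm_cast; conv_rhs => rw [← Finset.card_fin Γ.E]
  exact (Finset.card_eq_sum_card_fiberwise (f := fun e => (Γ.ends e).2)
    (fun x _ => Finset.mem_univ _)).symm

private lemma StableGraph.sum_leg (Γ : StableGraph g n) :
    ∑ v : Fin Γ.V, (((Finset.univ.filter fun i => Γ.leg i = v).card : ℤ)) = n := by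
  rw [← Nat.cast_sum]; norm_cast; conv_rhs => rw [← Finset.card_fin n]
  exact (Finset.card_eq_sum_card_fiberwise (f := Γ.leg)
    (fun x _ => Finset.mem_univ _)).symm

private lemma StableGraph.V_le (Γ : StableGraph g n) : (Γ.V : ℤ) ≤ 2 * g + n := by
  have hsum : ∑ v : Fin Γ.V, (1 : ℤ) ≤
      ∑ v : Fin Γ.V, (2 * (Γ.genus v : ℤ) - 2 +
        (((Finset.univ.filter fun e => (Γ.ends e).1 = v).card : ℤ) +
         ((Finset.univ.filter fun e => (Γ.ends e).2 = v).card : ℤ) +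
         ((Finset.univ.filter fun i => Γ.leg i = v).card : ℤ))) :=
    Finset.sum_le_sum fun v _ => (Γ.stable v)
  have h1 := Γ.sum_fst
  have h2 := Γ.sum_snd
  have h3 := Γ.sum_leg
  have hg := Γ.genus_eq
  simp only [Finset.sum_add_distrib, Finset.sum_sub_distrib, ← Finset.mul_sum,
    Finset.sum_const, Finset.card_univ, Fintype.card_fin, nsmul_eq_mul, mul_one] at hsum
  rw [h1, h2, h3] at hsum
  linarith

private lemma StableGraph.E_le (Γ : StableGraph g n) : (Γ.E : ℤ) ≤ 3 * g + n := by
  have hg := Γ.genus_eq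
  have h1 : (0:ℤ) ≤ ∑ v, (Γ.genus v : ℤ) :=
    Finset.sum_nonneg fun v _ => Int.natCast_nonneg _
  have h2 := Γ.V_le
  linarith

private lemma StableGraph.genus_le (Γ : StableGraph g n) (v : Fin Γ.V) :
    (Γ.genus v : ℤ) ≤ 3 * g + n := by
  have h1 : (Γ.genus v : ℤ) ≤ ∑ w, (Γ.genus w : ℤ) :=
    Finset.single_le_sum (f := fun w => (Γ.genus w : ℤ))
      (fun w _ => Int.natCast_nonneg _) (Finset.mem_univ v)
  have hg := Γ.genus_eq
  have h0 : (0 : ℤ) ≤ Γ.E := Int.natCast_nonneg _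
  have h3 := Γ.V_le
  linarith

private def StableGraph.enc (Γ : StableGraph g n) :
    Σ (V : Fin (2*g+n+1)) (E : Fin (3*g+n+1)),
      (Fin E.val → Fin V.val × Fin V.val) × (Fin n → Fin V.val) ×
        (Fin V.val → Fin (3*g+n+1)) :=
  ⟨⟨Γ.V, by have := Γ.V_le; omega⟩, ⟨Γ.E, by have := Γ.E_le; omega⟩,
    Γ.ends, Γ.leg, fun v => ⟨Γ.genus v, by have := Γ.genus_le v; omega⟩⟩

private lemma StableGraph.enc_inj :
    Function.Injective (StableGraph.enc (g := g) (n := n)) := by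
  rintro ⟨V₁,E₁,hV₁,ends₁,leg₁,gen₁,c₁,ge₁,s₁⟩ ⟨V₂,E₂,hV₂,ends₂,leg₂,gen₂,c₂,ge₂,s₂⟩ h
  simp only [enc, Sigma.mk.inj_iff, Fin.mk.injEq] at h
  obtain ⟨rfl, h⟩ := h
  rw [heq_eq_eq, Sigma.mk.inj_iff, Fin.mk.injEq] at h
  obtain ⟨rfl, h⟩ := h
  rw [heq_eq_eq, Prod.mk.injEq, Prod.mk.injEq] at h
  obtain ⟨rfl, rfl, hgen⟩ := h
  obtain rfl : gen₁ = gen₂ := by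
    funext v
    have := congrFun hgen v
    rwa [Fin.mk.injEq] at this
  rfl

instance : Finite (StableGraph g n) :=
  Finite.of_injective _ StableGraph.enc_inj

end AuxFiniteness

theorem stableGraph_finitely_many_iso_classes (g n : ℕ)
    (h : 0 < 2 * (g : ℤ) - 2 + n) :
    Finite (Quot (StableGraph.Iso (g := g) (n := n))) := by
  exact Finite.of_surjective _ Quot.mk_surjective
end
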